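/- arXiv:1501.04826 — 2 statements merged into one kernel-verified Lean document; each statement's English description precedes it below -/
import Mathlib

section
/- Let γ be a confidence parameter with 0 < γ < 1, let X₀ → Y₀, X₁ → Y₁, …, X_k → Y_k be partial implications over [n] with k ≥ 1, and assume that the entailment X₁ → Y₁, …, X_k → Y_k ⊨_γ X₀ → Y₀ holds properly. Then X₀Y₀ ⊆ X₁Y₁ ∪ ⋯ ∪ X_kY_k. -/
open Finset

/-- Number of transactions in the dataset `D` that cover `X`, counted with multiplicity. -/
def cntD {n : ℕ} (D : Multiset (Finset (Fin n))) (X : Finset (Fin n)) : ℕ :=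
  (D.filter (fun Z => X ⊆ Z)).card

/-- `D ⊨_γ X → Y` : either no transaction covers `X`, or the confidence of `X → Y` is ≥ γ. -/
def satPI {n : ℕ} (γ : ℝ) (D : Multiset (Finset (Fin n))) (X Y : Finset (Fin n)) : Prop :=
  cntD D X = 0 ∨ γ * (cntD D X : ℝ) ≤ (cntD D (X ∪ Y) : ℝ)

/-- Entailment at confidence threshold γ from the premises indexed by `L`. -/
def entailsFrom {n k : ℕ} (γ : ℝ) (P : Fin k → Finset (Fin n) × Finset (Fin n))
    (L : Finset (Fin k)) (X₀ Y₀ : Finset (Fin n)) : Prop :=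
  ∀ D : Multiset (Finset (Fin n)),
    (∀ i ∈ L, satPI γ D (P i).1 (P i).2) → satPI γ D X₀ Y₀

/-- Proper entailment from the premises indexed by `L`: the entailment holds,
and it fails from every proper subset of the premises. -/
def properFrom {n k : ℕ} (γ : ℝ) (P : Fin k → Finset (Fin n) × Finset (Fin n))
    (L : Finset (Fin k)) (X₀ Y₀ : Finset (Fin n)) : Prop :=
  entailsFrom γ P L X₀ Y₀ ∧ ∀ L' ⊂ L, ¬ entailsFrom γ P L' X₀ Y₀

/-- The weight `w_Z(X → Y)`: `1-γ` if `Z` witnesses, `-γ` if `Z` violates, `0` otherwise. -/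
noncomputable def wt {n : ℕ} (γ : ℝ) (Z X Y : Finset (Fin n)) : ℝ :=
  if X ∪ Y ⊆ Z then 1 - γ else if X ⊆ Z then -γ else 0

/-- The premises indexed by `L` enforce homogeneity. -/
def homogFrom {n k : ℕ} (P : Fin k → Finset (Fin n) × Finset (Fin n))
    (L : Finset (Fin k)) : Prop :=
  ∀ Z : Finset (Fin n),
    (∀ i ∈ L, ¬ (P i).1 ⊆ Z ∨ (P i).1 ∪ (P i).2 ⊆ Z) →
    ((∀ i ∈ L, ¬ (P i).1 ⊆ Z) ∨ (∀ i ∈ L, (P i).1 ∪ (P i).2 ⊆ Z))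

/-- The critical threshold `γ*({Xᵢ → Yᵢ : i ∈ L}, X)`. -/
noncomputable def gammaStar {n k : ℕ} (P : Fin k → Finset (Fin n) × Finset (Fin n))
    (L : Finset (Fin k)) (X : Finset (Fin n)) : ℝ :=
  sInf { r : ℝ | ∃ lam : Fin k → ℝ, (∀ i ∈ L, 0 ≤ lam i) ∧ (∑ i ∈ L, lam i) = 1 ∧
    r = (Finset.univ.filter (fun Z : Finset (Fin n) => ¬ X ⊆ Z)).fold max 0
          (fun Z => (∑ i ∈ L.filter (fun i => (P i).1 ∪ (P i).2 ⊆ Z), lam i) /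
                    (∑ i ∈ L.filter (fun i => (P i).1 ⊆ Z), lam i)) }

/-!
Suppose every premise satisfies `XᵢYᵢ ⊆ Z`. If `X₀ ⊄ Z`, padding any dataset with enough copies of
`Z` makes all premises true without touching the counts of `X₀`, so the conclusion would already
follow from no premises at all, contradicting properness. If `X₀ ⊆ Z` but `X₀Y₀ ⊄ Z`, the one-row
dataset `{Z}` satisfies every premise and violates the conclusion. Taking `Z = ⋃ XᵢYᵢ` gives the
theorem.
-/

variable {n k : ℕ}

lemma cntD_singleton (Z X : Finset (Fin n)) :
    cntD {Z} X = if X ⊆ Z then 1 else 0 := by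
  by_cases h : X ⊆ Z <;> simp [cntD, Multiset.filter_singleton, h]

lemma cntD_add_replicate (D : Multiset (Finset (Fin n))) (m : ℕ) (Z X : Finset (Fin n)) :
    cntD (D + Multiset.replicate m Z) X = cntD D X + if X ⊆ Z then m else 0 := by
  have hrep : (Multiset.replicate m Z).filter (X ⊆ ·) =
      if X ⊆ Z then Multiset.replicate m Z else 0 := by
    split_ifs with h
    · exact Multiset.filter_eq_self.mpr fun _ hZ' => Multiset.eq_of_mem_replicate hZ' ▸ h
    · exact Multiset.filter_eq_nil.mpr fun _ hZ' => Multiset.eq_of_mem_replicate hZ' ▸ h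
  simp only [cntD, Multiset.filter_add, Multiset.card_add, hrep]
  split_ifs <;> simp

lemma cntD_le_card (D : Multiset (Finset (Fin n))) (X : Finset (Fin n)) :
    cntD D X ≤ Multiset.card D :=
  Multiset.card_le_card (Multiset.filter_le _ _)

lemma satPI_singleton_iff {γ : ℝ} (hγ0 : 0 < γ) (hγ1 : γ ≤ 1) (Z X Y : Finset (Fin n)) :
    satPI γ {Z} X Y ↔ (X ⊆ Z → X ∪ Y ⊆ Z) := by
  by_cases hX : X ⊆ Z
  · by_cases hXY : X ∪ Y ⊆ Z <;> simp [satPI, cntD_singleton, hX, hXY, hγ1, hγ0.not_ge]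
  · simp [satPI, cntD_singleton, hX]

lemma satPI_add_replicate {γ : ℝ} (hγ : 0 ≤ γ) {D : Multiset (Finset (Fin n))} {m : ℕ}
    {X Y Z : Finset (Fin n)} (hXY : X ∪ Y ⊆ Z)
    (hm : γ * Multiset.card D ≤ (1 - γ) * m) :
    satPI γ (D + Multiset.replicate m Z) X Y := by
  right
  rw [cntD_add_replicate, cntD_add_replicate, if_pos (subset_union_left.trans hXY), if_pos hXY]
  have hcard : (cntD D X : ℝ) ≤ Multiset.card D := by exact_mod_cast cntD_le_card D X
  have hXY_nonneg : (0 : ℝ) ≤ cntD D (X ∪ Y) := Nat.cast_nonneg _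
  push_cast
  nlinarith

lemma entailsFrom_empty_of_not_subset {γ : ℝ} (hγ0 : 0 ≤ γ) (hγ1 : γ < 1)
    {P : Fin k → Finset (Fin n) × Finset (Fin n)} {L : Finset (Fin k)}
    {X₀ Y₀ Z : Finset (Fin n)} (hZ : ∀ i ∈ L, (P i).1 ∪ (P i).2 ⊆ Z) (hX : ¬ X₀ ⊆ Z)
    (h : entailsFrom γ P L X₀ Y₀) : entailsFrom γ P ∅ X₀ Y₀ := by
  intro D _
  obtain ⟨m, hm⟩ := exists_nat_ge (γ * Multiset.card D / (1 - γ))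
  have hm' : γ * Multiset.card D ≤ (1 - γ) * m := by
    rw [div_le_iff₀ (sub_pos.mpr hγ1)] at hm
    linarith
  have hpad := h _ fun i hi => satPI_add_replicate hγ0 (hZ i hi) hm'
  have hXY : ¬ X₀ ∪ Y₀ ⊆ Z := fun h' => hX (subset_union_left.trans h')
  simpa only [satPI, cntD_add_replicate, if_neg hX, if_neg hXY, add_zero] using hpad

lemma not_entailsFrom_of_subset {γ : ℝ} (hγ0 : 0 < γ) (hγ1 : γ ≤ 1)
    {P : Fin k → Finset (Fin n) × Finset (Fin n)} {L : Finset (Fin k)}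
    {X₀ Y₀ Z : Finset (Fin n)} (hZ : ∀ i ∈ L, (P i).1 ∪ (P i).2 ⊆ Z) (hX : X₀ ⊆ Z)
    (hXY : ¬ X₀ ∪ Y₀ ⊆ Z) : ¬ entailsFrom γ P L X₀ Y₀ := fun h =>
  have hconc := h {Z} fun i hi => (satPI_singleton_iff hγ0 hγ1 _ _ _).mpr fun _ => hZ i hi
  hXY (((satPI_singleton_iff hγ0 hγ1 _ _ _).mp hconc) hX)

lemma properFrom.union_subset {γ : ℝ} (hγ0 : 0 < γ) (hγ1 : γ < 1)
    {P : Fin k → Finset (Fin n) × Finset (Fin n)} {L : Finset (Fin k)} (hL : L.Nonempty)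
    {X₀ Y₀ Z : Finset (Fin n)} (h : properFrom γ P L X₀ Y₀)
    (hZ : ∀ i ∈ L, (P i).1 ∪ (P i).2 ⊆ Z) : X₀ ∪ Y₀ ⊆ Z := by
  by_cases hX : X₀ ⊆ Z
  · by_contra hXY
    exact not_entailsFrom_of_subset hγ0 hγ1.le hZ hX hXY h.1
  · exact (h.2 ∅ hL.empty_ssubset (entailsFrom_empty_of_not_subset hγ0.le hγ1 hZ hX h.1)).elim

theorem stmt7 {n k : ℕ} (γ : ℝ) (hγ0 : 0 < γ) (hγ1 : γ < 1) (hk : 1 ≤ k)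
    (P : Fin k → Finset (Fin n) × Finset (Fin n)) (X₀ Y₀ : Finset (Fin n))
    (hproper : properFrom γ P Finset.univ X₀ Y₀) :
    X₀ ∪ Y₀ ⊆ Finset.univ.biUnion (fun i => (P i).1 ∪ (P i).2) := by
  have : Nonempty (Fin k) := Fin.pos_iff_nonempty.mp hk
  exact hproper.union_subset hγ0 hγ1 univ_nonempty fun i hi =>
    subset_biUnion_of_mem (fun i => (P i).1 ∪ (P i).2) hi
end

section
/- Let γ be a confidence parameter with 0 < γ < 1, let X₀ → Y₀, X₁ → Y₁, …, X_k → Y_k be partial implications over [n] with k ≥ 1, and assume that the entailment X₁ → Y₁, …, X_k → Y_k ⊨_γ X₀ → Y₀ holds properly. Then for every i ∈ [k], X_i ⊆ X₀ and X_iY_i ⊄ X₀. -/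
open Finset

/-!
Let `margin γ D X Y = C_D[XY] - γ C_D[X]`, so `D ⊨_γ X → Y` iff the margin is nonnegative. The
margin is additive in `D`, and each copy of a transaction `Z` adds `wt γ Z X Y` to it. So a copy
of `[n]` adds `1 - γ` to every margin. A copy of `X₀` adds `-γ` to the margin of `X₀ → Y₀` and at
least `-γ` to every other margin.

First, `X₀Y₀ ⊄ X₀`, since otherwise the empty set of premises would already entail `X₀ → Y₀`. Now
suppose `X₀` does not violate a premise `Xᵢ → Yᵢ`, and `D` satisfies the other premises but not
`X₀ → Y₀`. Take `m` copies of `D`, add `a` copies of `X₀`, and add about `γa / (1 - γ)` copies of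
`[n]`; taking `m` large absorbs the rounding. The other premises stay satisfied and the conclusion
stays violated. Premise `i` is not hurt by the copies of `X₀`, so for large `a` the copies of
`[n]` make it hold as well. This contradicts the entailment, so premise `i` can be dropped,
contradicting properness.
-/

noncomputable def margin {n : ℕ} (γ : ℝ) (D : Multiset (Finset (Fin n))) (X Y : Finset (Fin n)) :
    ℝ :=
  cntD D (X ∪ Y) - γ * cntD D X

def Violates {n : ℕ} (Z X Y : Finset (Fin n)) : Prop :=
  X ⊆ Z ∧ ¬ X ∪ Y ⊆ Z

section Weight

variable {n : ℕ} {γ : ℝ} {Z X Y : Finset (Fin n)}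

lemma wt_univ (γ : ℝ) (X Y : Finset (Fin n)) : wt γ univ X Y = 1 - γ := by
  simp [wt]

lemma neg_le_wt (hγ : 0 ≤ γ) : -γ ≤ wt γ Z X Y := by
  unfold wt
  split_ifs <;> linarith

lemma wt_nonneg_of_not_violates (hγ : γ ≤ 1) (h : ¬ Violates Z X Y) : 0 ≤ wt γ Z X Y := by
  unfold wt
  split_ifs with hXY hX
  · linarith
  · exact absurd ⟨hX, hXY⟩ h
  · exact le_rfl

lemma wt_self (hY : ¬ X ∪ Y ⊆ X) : wt γ X X Y = -γ := by
  simp [wt, hY]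

end Weight

section Margin

variable {n : ℕ} {γ : ℝ}

lemma cntD_add (D D' : Multiset (Finset (Fin n))) (X : Finset (Fin n)) :
    cntD (D + D') X = cntD D X + cntD D' X := by
  simp [cntD, Multiset.filter_add]

lemma cntD_nsmul (m : ℕ) (D : Multiset (Finset (Fin n))) (X : Finset (Fin n)) :
    cntD (m • D) X = m * cntD D X := by
  simp [cntD, Multiset.filter_nsmul]

lemma cntD_replicate (a : ℕ) (Z X : Finset (Fin n)) :
    cntD (Multiset.replicate a Z) X = if X ⊆ Z then a else 0 := by
  unfold cntD
  split_ifs with h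
  · rw [Multiset.filter_eq_self.2 fun W hW => Multiset.eq_of_mem_replicate hW ▸ h,
      Multiset.card_replicate]
  · rw [Multiset.filter_eq_nil.2 fun W hW => Multiset.eq_of_mem_replicate hW ▸ h,
      Multiset.card_zero]

lemma cntD_union_le (D : Multiset (Finset (Fin n))) (X Y : Finset (Fin n)) :
    cntD D (X ∪ Y) ≤ cntD D X :=
  Multiset.card_le_card <| Multiset.monotone_filter_right D fun _ h => subset_union_left.trans h

lemma margin_add (D D' : Multiset (Finset (Fin n))) (X Y : Finset (Fin n)) :
    margin γ (D + D') X Y = margin γ D X Y + margin γ D' X Y := by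
  simp only [margin, cntD_add]
  push_cast
  ring

lemma margin_nsmul (m : ℕ) (D : Multiset (Finset (Fin n))) (X Y : Finset (Fin n)) :
    margin γ (m • D) X Y = m * margin γ D X Y := by
  simp only [margin, cntD_nsmul]
  push_cast
  ring

lemma margin_replicate (a : ℕ) (Z X Y : Finset (Fin n)) :
    margin γ (Multiset.replicate a Z) X Y = a * wt γ Z X Y := by
  have hX : X ∪ Y ⊆ Z → X ⊆ Z := subset_union_left.trans
  unfold margin wt
  by_cases hXY : X ∪ Y ⊆ Z
  · simp only [cntD_replicate, hXY, hX hXY, if_true]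
    ring
  by_cases hXZ : X ⊆ Z
  · simp only [cntD_replicate, hXY, hXZ, if_true, if_false, Nat.cast_zero]
    ring
  · simp [cntD_replicate, hXY, hXZ]

lemma satPI_iff_margin_nonneg (D : Multiset (Finset (Fin n))) (X Y : Finset (Fin n)) :
    satPI γ D X Y ↔ 0 ≤ margin γ D X Y := by
  rw [satPI, margin, sub_nonneg]
  refine ⟨?_, Or.inr⟩
  rintro (h | h)
  · simp [h, Nat.le_zero.1 (h ▸ cntD_union_le D X Y)]
  · exact h

end Margin

section Entailment

variable {n k : ℕ} {γ : ℝ} {P : Fin k → Finset (Fin n) × Finset (Fin n)} {L : Finset (Fin k)}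
  {X₀ Y₀ : Finset (Fin n)}

lemma entailsFrom_of_union_subset (hγ : γ ≤ 1) (h : X₀ ∪ Y₀ ⊆ X₀) :
    entailsFrom γ P L X₀ Y₀ := by
  intro D _
  rw [satPI_iff_margin_nonneg, margin, union_eq_left.2 (union_subset_iff.1 h).2]
  nlinarith [(cntD D X₀).cast_nonneg (α := ℝ)]

lemma exists_nat_le_mul_le_mul_lt (hγ0 : 0 < γ) (hγ1 : γ < 1) (r : ℝ) :
    ∃ a b : ℕ, r ≤ γ * a ∧ γ * a ≤ (1 - γ) * b ∧ (1 - γ) * b < γ * a + 1 := by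
  have hγ1' : 0 < 1 - γ := sub_pos.2 hγ1
  set a := ⌈r / γ⌉₊
  have ht : (1 - γ) * (γ * a / (1 - γ)) = γ * a := mul_div_cancel₀ _ hγ1'.ne'
  have hb_ge := Nat.le_ceil (γ * a / (1 - γ))
  have hb_lt := Nat.ceil_lt_add_one (div_nonneg (by positivity) hγ1'.le : 0 ≤ γ * a / (1 - γ))
  refine ⟨a, ⌈γ * a / (1 - γ)⌉₊, ?_, ?_, ?_⟩
  · exact (div_le_iff₀' hγ0).1 (Nat.le_ceil _)
  · nlinarith
  · nlinarith

theorem entailsFrom_erase_of_not_violates (hγ0 : 0 < γ) (hγ1 : γ < 1) {i : Fin k}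
    (hent : entailsFrom γ P L X₀ Y₀) (hY₀ : ¬ X₀ ∪ Y₀ ⊆ X₀)
    (hi : ¬ Violates X₀ (P i).1 (P i).2) :
    entailsFrom γ P (L.erase i) X₀ Y₀ := by
  intro D hD
  rw [satPI_iff_margin_nonneg]
  by_contra! hfail
  obtain ⟨m, hm⟩ := exists_nat_gt (1 / -margin γ D X₀ Y₀)
  obtain ⟨a, b, hai, hab, hba⟩ :=
    exists_nat_le_mul_le_mul_lt hγ0 hγ1 (-(m * margin γ D (P i).1 (P i).2))
  set D' := m • D + Multiset.replicate a X₀ + Multiset.replicate b univ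
  have hmargin : ∀ X Y, margin γ D' X Y = m * margin γ D X Y + a * wt γ X₀ X Y + b * (1 - γ) :=
    fun X Y => by rw [margin_add, margin_add, margin_nsmul, margin_replicate, margin_replicate,
      wt_univ]
  have hD' : ∀ j ∈ L, satPI γ D' (P j).1 (P j).2 := by
    intro j hj
    rw [satPI_iff_margin_nonneg, hmargin]
    by_cases hji : j = i
    · subst hji
      have := wt_nonneg_of_not_violates hγ1.le hi
      nlinarith
    · have hDj := (satPI_iff_margin_nonneg D _ _).1 (hD j (mem_erase.2 ⟨hji, hj⟩))
      have := neg_le_wt (Z := X₀) (X := (P j).1) (Y := (P j).2) hγ0.le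
      nlinarith
  have hconcl := (satPI_iff_margin_nonneg D' X₀ Y₀).1 (hent D' hD')
  rw [hmargin, wt_self hY₀] at hconcl
  rw [div_lt_iff₀ (neg_pos.2 hfail)] at hm
  nlinarith

end Entailment

theorem stmt9_general {n k : ℕ} (γ : ℝ) (hγ0 : 0 < γ) (hγ1 : γ < 1)
    (P : Fin k → Finset (Fin n) × Finset (Fin n)) (X₀ Y₀ : Finset (Fin n))
    (hproper : properFrom γ P Finset.univ X₀ Y₀) :
    ∀ i, (P i).1 ⊆ X₀ ∧ ¬ ((P i).1 ∪ (P i).2 ⊆ X₀) := by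
  obtain ⟨hent, hmin⟩ := hproper
  intro i
  have hY₀ : ¬ X₀ ∪ Y₀ ⊆ X₀ := fun h =>
    hmin ∅ (empty_ssubset.2 ⟨i, mem_univ i⟩) (entailsFrom_of_union_subset hγ1.le h)
  by_contra hi
  exact hmin _ (erase_ssubset (mem_univ i))
    (entailsFrom_erase_of_not_violates hγ0 hγ1 hent hY₀ hi)

theorem stmt9 {n k : ℕ} (γ : ℝ) (hγ0 : 0 < γ) (hγ1 : γ < 1) (hk : 1 ≤ k)
    (P : Fin k → Finset (Fin n) × Finset (Fin n)) (X₀ Y₀ : Finset (Fin n))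
    (hproper : properFrom γ P Finset.univ X₀ Y₀) :
    ∀ i, (P i).1 ⊆ X₀ ∧ ¬ ((P i).1 ∪ (P i).2 ⊆ X₀) :=
  stmt9_general γ hγ0 hγ1 P X₀ Y₀ hproper
end
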